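/- Let (X,d) be a finite metric space and let E ⊆ X be constructed greedily: start with any point, and at each step add a point of X whose distance to the current set E is maximal, until |E| = k. Then assigning every point of X to its nearest point in E gives k clusters whose maximum radius is at most twice the optimal k-center radius, i.e., max_{x∈X} d(x, E) ≤ 2·r_opt, where r_opt = min over all k-point subsets C ⊆ X of max_{x∈X} d(x, C). -/

import Mathlib

/-!
Let `x` be any point and `r` its distance to the greedy centers `c 0, …, c (k-1)`. Because each
center was a farthest point when chosen, the `k + 1` points `c 0, …, c (k-1), x` are pairwise at
distance at least `r`. An optimal solution covers them with `k` balls of radius `r_opt`, so two of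
them share a center and, by the triangle inequality, `r ≤ 2 r_opt`.
-/

open Metric

section

variable {X : Type*} [PseudoMetricSpace X]

theorem Finset.exists_mem_dist_le_of_infDist_le {C : Finset X} (hC : C.Nonempty) {x : X} {ρ : ℝ}
    (h : infDist x (C : Set X) ≤ ρ) : ∃ z ∈ C, dist x z ≤ ρ := by
  obtain ⟨z, hz, hdist⟩ := C.finite_toSet.isCompact.exists_infDist_eq_dist (by simpa using hC) x
  exact ⟨z, hz, hdist ▸ h⟩

theorem le_two_mul_of_pairwise_le_dist_of_card_lt {ι : Type*} [Fintype ι] {p : ι → X} {r ρ : ℝ}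
    (hsep : Pairwise fun i j => r ≤ dist (p i) (p j)) (C : Finset X)
    (hcard : C.card < Fintype.card ι) (hcover : ∀ i, ∃ z ∈ C, dist (p i) z ≤ ρ) :
    r ≤ 2 * ρ := by
  choose g hgC hg using hcover
  obtain ⟨i, -, j, -, hij, hgij⟩ :=
    Finset.exists_ne_map_eq_of_card_lt_of_maps_to (s := Finset.univ) (by simpa using hcard)
      (fun i _ => hgC i)
  calc r ≤ dist (p i) (p j) := hsep hij
    _ ≤ dist (p i) (g i) + dist (p j) (g i) := dist_triangle_right _ _ _
    _ ≤ ρ + ρ := add_le_add (hg i) (hgij ▸ hg j)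
    _ = 2 * ρ := (two_mul ρ).symm

section Greedy

variable {c : ℕ → X} {k : ℕ}
  (hgreedy : ∀ i : ℕ, 1 ≤ i → i < k → ∀ x : X,
    infDist x (c '' {j : ℕ | j < i}) ≤ infDist (c i) (c '' {j : ℕ | j < i}))
include hgreedy

theorem infDist_greedy_le_dist (x : X) {i j : ℕ} (hij : i < j) (hjk : j < k) :
    infDist x (c '' {m | m < k}) ≤ dist (c i) (c j) :=
  calc infDist x (c '' {m | m < k})
      ≤ infDist x (c '' {m | m < j}) :=
        infDist_le_infDist_of_subset (Set.image_mono fun _ hm => hm.trans hjk) ⟨c i, i, hij, rfl⟩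
    _ ≤ infDist (c j) (c '' {m | m < j}) := hgreedy j (by omega) hjk x
    _ ≤ dist (c i) (c j) := dist_comm (c j) (c i) ▸ infDist_le_dist_of_mem ⟨i, hij, rfl⟩

theorem pairwise_infDist_greedy_le_dist (x : X) :
    Pairwise fun a b : Option (Fin k) =>
      infDist x (c '' {m | m < k}) ≤ dist (a.elim x (c ·)) (b.elim x (c ·)) := by
  have hx (i : Fin k) : infDist x (c '' {m | m < k}) ≤ dist x (c i) :=
    infDist_le_dist_of_mem ⟨i, i.isLt, rfl⟩
  have hc {i j : Fin k} (hij : i ≠ j) : infDist x (c '' {m | m < k}) ≤ dist (c i) (c j) := by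
    rcases Fin.lt_or_lt_of_ne hij with h | h
    · exact infDist_greedy_le_dist hgreedy x h j.isLt
    · exact dist_comm (c j) (c i) ▸ infDist_greedy_le_dist hgreedy x h i.isLt
  rintro (_ | i) (_ | j) hab
  · exact absurd rfl hab
  · exact hx j
  · exact dist_comm x (c i) ▸ hx i
  · exact hc fun h => hab (congrArg some h)

end Greedy

end

theorem gonzalez_two_approx_general
    {X : Type*} [MetricSpace X]
    (k : ℕ) (c : ℕ → X)
    (hgreedy : ∀ i : ℕ, 1 ≤ i → i < k → ∀ x : X,
      Metric.infDist x (c '' {j : ℕ | j < i}) ≤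
        Metric.infDist (c i) (c '' {j : ℕ | j < i}))
    (ropt : ℝ)
    (hropt : IsLeast {v : ℝ | ∃ C : Finset X, C.card = k ∧
      ∀ x : X, Metric.infDist x (C : Set X) ≤ v} ropt) :
    ∀ x : X, Metric.infDist x (c '' {j : ℕ | j < k}) ≤ 2 * ropt := by
  intro x
  obtain ⟨C, hCcard, hC⟩ := hropt.1
  rcases C.eq_empty_or_nonempty with rfl | hCne
  · -- `k = 0`: the distance to the empty set of centers is `0` by convention
    subst hCcard
    simpa using hC x
  exact le_two_mul_of_pairwise_le_dist_of_card_lt (pairwise_infDist_greedy_le_dist hgreedy x) C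
    (by simp [hCcard]) fun a => Finset.exists_mem_dist_le_of_infDist_le hCne (hC _)

/-- Gonzalez's greedy algorithm is a 2-approximation for k-center: if the
centers `c 0, …, c (k-1)` are chosen so that each `c i` (for `1 ≤ i < k`) is a
farthest point from the previously chosen centers, then every point is within
distance `2 · r_opt` of the chosen centers, where `r_opt` is the optimal
k-center radius. -/
theorem gonzalez_two_approx
    {X : Type*} [MetricSpace X] [Fintype X] [Nonempty X]
    (k : ℕ) (hk : 1 ≤ k) (c : ℕ → X)
    (hgreedy : ∀ i : ℕ, 1 ≤ i → i < k → ∀ x : X,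
      Metric.infDist x (c '' {j : ℕ | j < i}) ≤
        Metric.infDist (c i) (c '' {j : ℕ | j < i}))
    (ropt : ℝ)
    (hropt : IsLeast {v : ℝ | ∃ C : Finset X, C.card = k ∧
      ∀ x : X, Metric.infDist x (C : Set X) ≤ v} ropt) :
    ∀ x : X, Metric.infDist x (c '' {j : ℕ | j < k}) ≤ 2 * ropt :=
  gonzalez_two_approx_general k c hgreedy ropt hropt
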